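/- Fix 0 < δ ≪ 1 and set μ = 1 − 2δ. For j ∈ ℤ²∖{0}, let b(j) be the minimum of |v·j| over all generators v with |v| ≤ |j|^δ, attained at v(j). There exists J_δ > 0 such that for all j with |j| > J_δ and |b(j)| < 2|j|^μ: for every generator w with |w| ≤ |j|^δ and w ≠ v(j), one has |w·j| ≥ 2⟨j⟩^μ > |v(j)·j|; in particular v(j) is the unique minimizer. -/
import Mathlib

noncomputable def enorm2 (v : ℤ × ℤ) : ℝ := Real.sqrt ((v.1 : ℝ)^2 + (v.2 : ℝ)^2)

def zdot (x v : ℤ × ℤ) : ℤ := x.1 * v.1 + x.2 * v.2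

def IsGenerator (v : ℤ × ℤ) : Prop := (Int.gcd v.1 v.2 = 1 ∧ 0 < v.1) ∨ v = (0, 1)

lemma enorm2_nonneg (v : ℤ × ℤ) : 0 ≤ enorm2 v := Real.sqrt_nonneg _

lemma abs_fst_le (v : ℤ × ℤ) : (|v.1| : ℝ) ≤ enorm2 v := by
  rw [← Real.sqrt_sq_eq_abs]
  exact Real.sqrt_le_sqrt (by nlinarith [sq_nonneg ((v.2 : ℝ))])

lemma abs_snd_le (v : ℤ × ℤ) : (|v.2| : ℝ) ≤ enorm2 v := by
  rw [← Real.sqrt_sq_eq_abs]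
  exact Real.sqrt_le_sqrt (by nlinarith [sq_nonneg ((v.1 : ℝ))])

lemma one_le_enorm2 {j : ℤ × ℤ} (h : j ≠ 0) : 1 ≤ enorm2 j := by
  have h1 : (1 : ℤ) ≤ j.1^2 + j.2^2 := by
    rcases eq_or_ne j.1 0 with h1 | h1
    · have h2 : j.2 ≠ 0 := by
        intro h2; exact h (Prod.ext h1 h2)
      nlinarith [sq_nonneg j.1, Int.one_le_abs h2, sq_abs j.2, sq_nonneg (|j.2| - 1)]
    · nlinarith [sq_nonneg j.2, Int.one_le_abs h1, sq_abs j.1, sq_nonneg (|j.1| - 1)]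
  have : (1:ℝ) ≤ (j.1:ℝ)^2 + (j.2:ℝ)^2 := by exact_mod_cast h1
  calc (1:ℝ) = Real.sqrt 1 := by simp
  _ ≤ _ := Real.sqrt_le_sqrt this

lemma det_ne_zero {v w : ℤ × ℤ} (hv : IsGenerator v) (hw : IsGenerator w)
    (hne : v ≠ w) : v.1 * w.2 - v.2 * w.1 ≠ 0 := by
  intro hd
  rcases hv with ⟨hvc, hv1⟩ | hv0 <;> rcases hw with ⟨hwc, hw1⟩ | hw0
  · -- both primitive
    have hd' : v.1 * w.2 = v.2 * w.1 := by linarith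
    have hcv : IsCoprime v.1 v.2 := Int.isCoprime_iff_gcd_eq_one.mpr hvc
    have hcw : IsCoprime w.1 w.2 := Int.isCoprime_iff_gcd_eq_one.mpr hwc
    have h1 : v.1 ∣ w.1 := hcv.dvd_of_dvd_mul_left ⟨w.2, by linarith [hd']⟩
    have h2 : w.1 ∣ v.1 := hcw.dvd_of_dvd_mul_left ⟨v.2, by linarith [hd']⟩
    have he : v.1 = w.1 := Int.dvd_antisymm hv1.le hw1.le h1 h2
    have he2 : v.2 = w.2 := by
      have := hd'
      rw [he] at this
      exact mul_right_cancel₀ (by exact_mod_cast hw1.ne') (by linarith)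
    exact hne (Prod.ext he he2)
  · rw [hw0] at hd; simp at hd; omega
  · rw [hv0] at hd; simp at hd; omega
  · exact hne (hv0.trans hw0.symm)

/-- `v` attains the minimum of `|w·j|` over generators `w` with `|w| ≤ |j|^δ`. -/
def IsMinimizer (δ : ℝ) (j v : ℤ × ℤ) : Prop :=
  IsGenerator v ∧ enorm2 v ≤ enorm2 j ^ δ ∧
    ∀ w : ℤ × ℤ, IsGenerator w → enorm2 w ≤ enorm2 j ^ δ → |zdot j v| ≤ |zdot j w|

set_option maxHeartbeats 1000000 in
/-- There is `J_δ > 0` such that for `|j| > J_δ` with `|b(j)| < 2|j|^μ`, every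
generator `w ≠ v(j)` with `|w| ≤ |j|^δ` satisfies `|w·j| ≥ 2⟨j⟩^μ > |v(j)·j|`;
in particular the minimizer is unique. -/
theorem stmt2 (δ μ : ℝ) (hδ : 0 < δ) (hδ' : δ < 1/4) (hμ : μ = 1 - 2*δ) :
    ∃ Jδ : ℝ, 0 < Jδ ∧ ∀ j vj : ℤ × ℤ, j ≠ 0 → Jδ < enorm2 j →
      IsMinimizer δ j vj → (|zdot j vj| : ℝ) < 2 * enorm2 j ^ μ →
      ∀ w : ℤ × ℤ, IsGenerator w → enorm2 w ≤ enorm2 j ^ δ → w ≠ vj →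
        2 * (1 + enorm2 j) ^ μ ≤ (|zdot j w| : ℝ) ∧
          (|zdot j vj| : ℝ) < 2 * (1 + enorm2 j) ^ μ := by
  refine ⟨(128 : ℝ) ^ (1/(2*δ)) + 1, by positivity, ?_⟩
  intro j vj hj hJ hmin hb w hwgen hwle hwne
  set N := enorm2 j with hN
  have hN1 : 1 ≤ N := one_le_enorm2 hj
  have hN0 : 0 < N := lt_of_lt_of_le one_pos hN1
  have hμ0 : 0 ≤ μ := by rw [hμ]; linarith
  have hμ1 : μ ≤ 1 := by rw [hμ]; linarith
  -- second conclusion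
  have h2 : (|zdot j vj| : ℝ) < 2 * (1 + N) ^ μ := by
    refine lt_of_lt_of_le hb ?_
    have := Real.rpow_le_rpow hN0.le (by linarith : N ≤ 1 + N) hμ0
    linarith
  refine ⟨?_, h2⟩
  by_contra hcon
  push_neg at hcon
  set C : ℝ := 2 * (1 + N) ^ μ with hC
  have hC0 : 0 < C := by positivity
  -- Cramer bounds
  obtain ⟨hvgen, hvle, -⟩ := hmin
  have hd : vj.1 * w.2 - vj.2 * w.1 ≠ 0 := det_ne_zero hvgen hwgen (Ne.symm hwne)
  have hd1 : (1 : ℤ) ≤ |vj.1 * w.2 - vj.2 * w.1| := Int.one_le_abs hd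
  have hNδ : (0:ℝ) ≤ N ^ δ := Real.rpow_nonneg hN0.le δ
  have key : ∀ k : ℤ, (k * (vj.1 * w.2 - vj.2 * w.1) = zdot j vj * w.2 - zdot j w * vj.2
      ∨ k * (vj.1 * w.2 - vj.2 * w.1) = zdot j w * vj.1 - zdot j vj * w.1) →
      (|k| : ℝ) ≤ 2 * C * N ^ δ := by
    intro k hk
    have hA : (|zdot j vj| : ℝ) ≤ C := le_of_lt h2
    have hB : (|zdot j w| : ℝ) ≤ C := hcon.le
    have hv2 : (|vj.2| : ℝ) ≤ N ^ δ := le_trans (abs_snd_le vj) hvle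
    have hw2 : (|w.2| : ℝ) ≤ N ^ δ := le_trans (abs_snd_le w) hwle
    have hv1 : (|vj.1| : ℝ) ≤ N ^ δ := le_trans (abs_fst_le vj) hvle
    have hw1 : (|w.1| : ℝ) ≤ N ^ δ := le_trans (abs_fst_le w) hwle
    rcases hk with hk | hk
    · have hz : |k| ≤ |zdot j vj| * |w.2| + |zdot j w| * |vj.2| := by
        calc |k| ≤ |k * (vj.1 * w.2 - vj.2 * w.1)| := by
              rw [abs_mul]; nlinarith [abs_nonneg k]
        _ = |zdot j vj * w.2 - zdot j w * vj.2| := by rw [hk]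
        _ ≤ |zdot j vj * w.2| + |zdot j w * vj.2| := abs_sub _ _
        _ = |zdot j vj| * |w.2| + |zdot j w| * |vj.2| := by rw [abs_mul, abs_mul]
      have hzr : (|k| : ℝ) ≤ (|zdot j vj| : ℝ) * (|w.2| : ℝ) + (|zdot j w| : ℝ) * (|vj.2| : ℝ) := by
        exact_mod_cast hz
      calc (|k| : ℝ) ≤ (|zdot j vj| : ℝ) * (|w.2| : ℝ) + (|zdot j w| : ℝ) * (|vj.2| : ℝ) := hzr
      _ ≤ C * N ^ δ + C * N ^ δ :=
        add_le_add (mul_le_mul hA hw2 (by positivity) hC0.le)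
          (mul_le_mul hB hv2 (by positivity) hC0.le)
      _ = 2 * C * N ^ δ := by ring
    · have hz : |k| ≤ |zdot j w| * |vj.1| + |zdot j vj| * |w.1| := by
        calc |k| ≤ |k * (vj.1 * w.2 - vj.2 * w.1)| := by
              rw [abs_mul]; nlinarith [abs_nonneg k]
        _ = |zdot j w * vj.1 - zdot j vj * w.1| := by rw [hk]
        _ ≤ |zdot j w * vj.1| + |zdot j vj * w.1| := abs_sub _ _
        _ = |zdot j w| * |vj.1| + |zdot j vj| * |w.1| := by rw [abs_mul, abs_mul]
      have hzr : (|k| : ℝ) ≤ (|zdot j w| : ℝ) * (|vj.1| : ℝ) + (|zdot j vj| : ℝ) * (|w.1| : ℝ) := by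
        exact_mod_cast hz
      calc (|k| : ℝ) ≤ (|zdot j w| : ℝ) * (|vj.1| : ℝ) + (|zdot j vj| : ℝ) * (|w.1| : ℝ) := hzr
      _ ≤ C * N ^ δ + C * N ^ δ :=
        add_le_add (mul_le_mul hB hv1 (by positivity) hC0.le)
          (mul_le_mul hA hw1 (by positivity) hC0.le)
      _ = 2 * C * N ^ δ := by ring
  have hj1 : (|j.1| : ℝ) ≤ 2 * C * N ^ δ := key j.1 (Or.inl (by simp [zdot]; ring))
  have hj2 : (|j.2| : ℝ) ≤ 2 * C * N ^ δ := key j.2 (Or.inr (by simp [zdot]; ring))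
  -- N² ≤ 2 (2C N^δ)²
  have hNsq : N ^ 2 = (j.1:ℝ)^2 + (j.2:ℝ)^2 := Real.sq_sqrt (by positivity)
  have hsq : N ^ 2 ≤ 8 * C ^ 2 * (N ^ δ) ^ 2 := by
    have a1 : (j.1:ℝ)^2 ≤ (2 * C * N ^ δ)^2 := by
      have := sq_abs ((j.1:ℝ)); nlinarith [abs_nonneg ((j.1:ℝ)), sq_abs ((j.1:ℝ))]
    have a2 : (j.2:ℝ)^2 ≤ (2 * C * N ^ δ)^2 := by
      nlinarith [abs_nonneg ((j.2:ℝ)), sq_abs ((j.2:ℝ))]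
    nlinarith [hNsq]
  -- bound C² ≤ 16 N^(2μ)
  have hC2 : C ^ 2 ≤ 16 * N ^ (2*μ) := by
    have h1 : (1 + N) ^ μ ≤ (2*N) ^ μ :=
      Real.rpow_le_rpow (by linarith) (by linarith) hμ0
    have h2' : ((2:ℝ)*N) ^ μ = 2 ^ μ * N ^ μ := Real.mul_rpow (by norm_num) hN0.le
    have h3 : (2:ℝ) ^ μ ≤ 2 := by
      calc (2:ℝ) ^ μ ≤ 2 ^ (1:ℝ) := Real.rpow_le_rpow_of_exponent_le (by norm_num) hμ1
      _ = 2 := Real.rpow_one 2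
    have h4 : (1 + N) ^ μ ≤ 2 * N ^ μ := by
      have hNμ : 0 ≤ N ^ μ := Real.rpow_nonneg hN0.le μ
      calc (1 + N) ^ μ ≤ 2 ^ μ * N ^ μ := by rw [← h2']; exact h1
      _ ≤ 2 * N ^ μ := mul_le_mul_of_nonneg_right h3 hNμ
    have h5 : N ^ μ * N ^ μ = N ^ (2*μ) := by
      rw [← Real.rpow_add hN0]; ring_nf
    have hp : 0 ≤ (1 + N) ^ μ := Real.rpow_nonneg (by linarith) μ
    have hNμ : 0 ≤ N ^ μ := Real.rpow_nonneg hN0.le μ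
    calc C ^ 2 = ((1 + N) ^ μ) * ((1 + N) ^ μ) * 4 := by rw [hC]; ring
    _ ≤ (2 * N ^ μ) * (2 * N ^ μ) * 4 := by nlinarith
    _ = 16 * N ^ (2*μ) := by rw [← h5]; ring
  have hδ2 : (N ^ δ) ^ 2 = N ^ (2*δ) := by
    rw [← Real.rpow_natCast (N ^ δ) 2, ← Real.rpow_mul hN0.le]; norm_num; ring_nf
  have hfin : N ^ 2 ≤ 128 * N ^ (2*μ) * N ^ (2*δ) := by
    rw [← hδ2]
    have : 8 * C ^ 2 * (N ^ δ) ^ 2 ≤ 128 * N ^ (2*μ) * (N ^ δ) ^ 2 := by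
      nlinarith [sq_nonneg (N ^ δ)]
    linarith
  have hmerge : N ^ (2*μ) * N ^ (2*δ) = N ^ (2 - 2*δ) := by
    rw [← Real.rpow_add hN0, hμ]; ring_nf
  have hsplit : N ^ 2 = N ^ (2 - 2*δ) * N ^ (2*δ) := by
    rw [← Real.rpow_add hN0, ← Real.rpow_natCast N 2]; norm_num
  -- deduce N^{2δ} ≤ 128
  have hpos : 0 < N ^ (2 - 2*δ) := Real.rpow_pos_of_pos hN0 _
  have h128 : N ^ (2*δ) ≤ 128 := by
    have h := hfin
    rw [mul_assoc, hmerge, hsplit] at h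
    have h' : N ^ (2 - 2*δ) * N ^ (2*δ) ≤ N ^ (2 - 2*δ) * 128 := by linarith
    exact le_of_mul_le_mul_left h' hpos
  -- contradiction with N > 128^(1/(2δ))
  have hJ' : (128 : ℝ) ^ (1/(2*δ)) < N := by linarith
  have : (128 : ℝ) < N ^ (2*δ) := by
    have h0 : (0:ℝ) < (128 : ℝ) ^ (1/(2*δ)) := by positivity
    calc (128:ℝ) = ((128 : ℝ) ^ (1/(2*δ))) ^ (2*δ) := by
          rw [← Real.rpow_mul (by norm_num)]
          rw [one_div, inv_mul_cancel₀ (by positivity), Real.rpow_one]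
    _ < N ^ (2*δ) := Real.rpow_lt_rpow h0.le hJ' (by positivity)
  linarith
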